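/- Suppose O : V → V is an orthogonal linear map, c > 0 is a real number, and A' = c · O⁻¹ ∘ A ∘ O (equivalently, ⟨A'v, w⟩ = c⟨A(Ov), Ow⟩ for all v, w). Then the linear map φ : 𝔤_A → 𝔤_{A'} defined by φ(v, α, a, b) = (O⁻¹v, c^{-1/2}·O⁻¹α, c^{1/2}·a, c^{-1/2}·b) is a Lie algebra isomorphism. (This realises, at the Lie algebra level, the 'if' direction of the Cahen–Wallach isometry criterion: M_A and M_{A'} are isometric when A'(v,w) = cA(Ov,Ow).) -/

import Mathlib

open scoped RealInnerProductSpace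

/-- The Cahen–Wallach bracket on `V × V × ℝ × ℝ`: an element `(v, α, a, b)` has components
along `V`, along `V*` (identified with `V` via the inner product), along `e₊` and along `e₋`,
and `[(v, α, a, b), (v', α', a', b')] = (b•Aα' − b'•Aα, b•v' − b'•v, ⟨Av', α⟩ − ⟨Av, α'⟩, 0)`. -/
def cwBracket {V : Type*} [NormedAddCommGroup V] [InnerProductSpace ℝ V]
    (A : V →ₗ[ℝ] V) (x y : V × V × ℝ × ℝ) : V × V × ℝ × ℝ :=
  (x.2.2.2 • A y.2.1 - y.2.2.2 • A x.2.1,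
   x.2.2.2 • y.1 - y.2.2.2 • x.1,
   ⟪A y.1, x.2.1⟫ - ⟪A x.1, y.2.1⟫,
   0)

/-- If `O : V → V` is orthogonal, `c > 0`, and `A' = c·O⁻¹∘A∘O`, then
`φ(v, α, a, b) = (O⁻¹v, c^{-1/2}·O⁻¹α, c^{1/2}·a, c^{-1/2}·b)` is a Lie algebra isomorphism
`𝔤_A → 𝔤_{A'}`.  (This realises, at the Lie algebra level, the 'if' direction of the
Cahen–Wallach isometry criterion.) -/
theorem cw_isometry_criterion_if
    {V : Type*} [NormedAddCommGroup V] [InnerProductSpace ℝ V] [FiniteDimensional ℝ V]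
    (A A' : V →ₗ[ℝ] V)
    (hA : ∀ v w : V, ⟪A v, w⟫ = ⟪v, A w⟫) (hA' : ∀ v w : V, ⟪A' v, w⟫ = ⟪v, A' w⟫)
    (O : V ≃ₗᵢ[ℝ] V) (c : ℝ) (hc : 0 < c)
    (hAA' : ∀ v : V, A' v = c • O.symm (A (O v))) :
    let φ : V × V × ℝ × ℝ → V × V × ℝ × ℝ := fun x =>
      (O.symm x.1, (Real.sqrt c)⁻¹ • O.symm x.2.1, Real.sqrt c * x.2.2.1,
        (Real.sqrt c)⁻¹ * x.2.2.2)
    (∀ x y : V × V × ℝ × ℝ, φ (x + y) = φ x + φ y) ∧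
    (∀ (r : ℝ) (x : V × V × ℝ × ℝ), φ (r • x) = r • φ x) ∧
    Function.Bijective φ ∧
    (∀ x y : V × V × ℝ × ℝ, φ (cwBracket A x y) = cwBracket A' (φ x) (φ y)) := by
  intro φ
  set s := Real.sqrt c with hs
  have hs0 : s ≠ 0 := ne_of_gt (Real.sqrt_pos.mpr hc)
  have hs2 : s * s = c := Real.mul_self_sqrt hc.le
  refine ⟨?_, ?_, ?_, ?_⟩
  · intro x y
    simp only [φ, Prod.fst_add, Prod.snd_add, map_add, smul_add, Prod.mk_add_mk]
    ring_nf
  · intro r x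
    simp only [φ, Prod.smul_fst, Prod.smul_snd, map_smul, smul_eq_mul, Prod.smul_mk,
      smul_smul]
    ring_nf
  · refine Function.bijective_iff_has_inverse.mpr
      ⟨fun x => (O x.1, s • O x.2.1, s⁻¹ * x.2.2.1, s * x.2.2.2), ?_, ?_⟩
    · intro x
      simp only [φ, ← hs, LinearIsometryEquiv.apply_symm_apply, map_smul, smul_smul,
        mul_inv_cancel₀ hs0, inv_mul_cancel₀ hs0, one_smul]
      refine Prod.ext rfl (Prod.ext rfl (Prod.ext ?_ ?_)) <;> field_simp
    · intro x
      simp only [φ, ← hs, LinearIsometryEquiv.symm_apply_apply, map_smul, smul_smul,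
        inv_mul_cancel₀ hs0, one_smul]
      refine Prod.ext rfl (Prod.ext rfl (Prod.ext ?_ ?_)) <;> field_simp
  · intro x y
    have hA'e : ∀ v : V, A' (O.symm v) = c • O.symm (A v) := by
      intro v; rw [hAA', O.apply_symm_apply]
    have hip : ∀ v w : V, ⟪O.symm v, O.symm w⟫ = ⟪v, w⟫ := fun v w =>
      O.symm.inner_map_map v w
    simp only [φ, cwBracket, map_sub, map_smul, hA'e, smul_smul,
      real_inner_smul_left, real_inner_smul_right, hip]
    simp only [← hs]
    have key : ∀ t : ℝ, s⁻¹ * t * (s⁻¹ * c) = t := by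
      intro t; rw [← hs2]; field_simp
    refine Prod.ext ?_ (Prod.ext ?_ (Prod.ext ?_ (by simp)))
    · simp only [key]
    · simp only [smul_sub, smul_smul]
    · rw [← hs2]; field_simp
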